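/- arXiv:1810.11676 — 5 statements merged into one kernel-verified Lean document; each statement's English description precedes it below -/
import Mathlib

section
/- Let l ≥ 2 be an integer and let K be a subfield of ℝ that is a number field of degree l over ℚ. Let α, β ∈ K satisfy 0 < α < 1 and 0 < β < 1, and suppose that 1, α, β are linearly independent over ℚ. Then α / |N(α)|^{1/(l−1)} ≠ β / |N(β)|^{1/(l−1)}. -/
/-- Let `l ≥ 2` and let `K ⊆ ℝ` be a number field of degree `l` over `ℚ`.
If `α, β ∈ K` satisfy `0 < α < 1`, `0 < β < 1` and `1, α, β` are linearly independent over
`ℚ`, then `α / |N(α)|^(1/(l-1)) ≠ β / |N(β)|^(1/(l-1))`. -/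
theorem stmt_0 (l : ℕ) (hl : 2 ≤ l)
    (K : IntermediateField ℚ ℝ) [FiniteDimensional ℚ K]
    (hdeg : Module.finrank ℚ K = l)
    (α β : K)
    (hα0 : 0 < (α : ℝ)) (hα1 : (α : ℝ) < 1)
    (hβ0 : 0 < (β : ℝ)) (hβ1 : (β : ℝ) < 1)
    (hind : LinearIndependent ℚ ![(1 : ℝ), (α : ℝ), (β : ℝ)]) :
    (α : ℝ) / (|(Algebra.norm ℚ α : ℚ)| : ℝ) ^ (((l : ℝ) - 1)⁻¹) ≠
    (β : ℝ) / (|(Algebra.norm ℚ β : ℚ)| : ℝ) ^ (((l : ℝ) - 1)⁻¹) := by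
  intro heq
  -- basic nonvanishing
  have hαne : α ≠ 0 := by
    intro h; rw [h] at hα0; simp at hα0
  have hβne : β ≠ 0 := by
    intro h; rw [h] at hβ0; simp at hβ0
  have hNα : Algebra.norm ℚ α ≠ 0 := Algebra.norm_ne_zero_iff.mpr hαne
  have hNβ : Algebra.norm ℚ β ≠ 0 := Algebra.norm_ne_zero_iff.mpr hβne
  set n : ℕ := l - 1 with hn
  have hnne : n ≠ 0 := by omega
  have hcast : ((l : ℝ) - 1) = (n : ℝ) := by
    have : (n : ℝ) = (l : ℝ) - 1 := by
      rw [hn, Nat.cast_sub (by omega)]; norm_num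
    linarith
  set A : ℚ := |Algebra.norm ℚ α| with hA
  set B : ℚ := |Algebra.norm ℚ β| with hB
  have hA0 : 0 < A := abs_pos.mpr hNα
  have hB0 : 0 < B := abs_pos.mpr hNβ
  have hA0' : (0:ℝ) < (A:ℝ) := by exact_mod_cast hA0
  have hB0' : (0:ℝ) < (B:ℝ) := by exact_mod_cast hB0
  set q : ℚ := A / B with hq
  have hq0 : 0 < q := div_pos hA0 hB0
  have hq0' : (0:ℝ) < (q:ℝ) := by exact_mod_cast hq0
  have heq' : (α : ℝ) / (A:ℝ) ^ (((l : ℝ) - 1)⁻¹) = (β : ℝ) / (B:ℝ) ^ (((l : ℝ) - 1)⁻¹) := by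
    rw [hA, hB]; push_cast; exact heq
  -- rewrite the hypothesis
  have hApow : (0:ℝ) < (A:ℝ) ^ (((l : ℝ) - 1)⁻¹) := Real.rpow_pos_of_pos hA0' _
  have hBpow : (0:ℝ) < (B:ℝ) ^ (((l : ℝ) - 1)⁻¹) := Real.rpow_pos_of_pos hB0' _
  -- the ratio
  have hratio : (α : ℝ) / (β : ℝ) = ((q : ℝ)) ^ (((n : ℝ))⁻¹) := by
    rw [hq]
    push_cast
    rw [Real.div_rpow hA0'.le hB0'.le, ← hcast]
    rw [div_eq_div_iff hApow.ne' hBpow.ne'] at heq'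
    rw [div_eq_div_iff hβ0.ne' hBpow.ne']
    linarith
  have hγpow : ((α : ℝ) / (β : ℝ)) ^ n = (q : ℝ) := by
    rw [hratio]
    exact Real.rpow_inv_natCast_pow (by positivity) hnne
  -- γ = α / β ∈ K
  set γ : K := α / β with hγ
  have hγℝ : (γ : ℝ) = (α : ℝ) / (β : ℝ) := by rw [hγ]; norm_cast
  have hγ0 : 0 < (γ : ℝ) := by rw [hγℝ]; positivity
  have hγq : γ ^ n = algebraMap ℚ K q := by
    have h : ((γ ^ n : K) : ℝ) = ((algebraMap ℚ K q : K) : ℝ) := by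
      push_cast
      rw [hγℝ, hγpow]
      simp
    exact_mod_cast Subtype.ext h
  -- embeddings into ℂ
  have hcard : Fintype.card (K →ₐ[ℚ] ℂ) = l := by
    rw [AlgHom.card]; exact hdeg
  have hprod : (algebraMap ℚ ℂ) (Algebra.norm ℚ γ) = ∏ σ : K →ₐ[ℚ] ℂ, σ γ :=
    Algebra.norm_eq_prod_embeddings ℚ ℂ γ
  have habs : ∀ σ : K →ₐ[ℚ] ℂ, ‖σ γ‖ = (γ : ℝ) := by
    intro σ
    have h1 : (σ γ) ^ n = (((q : ℝ)) : ℂ) := by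
      rw [← map_pow, hγq, σ.commutes, eq_ratCast (algebraMap ℚ ℂ)]
      push_cast
      ring
    have h2 : (‖σ γ‖) ^ n = (q : ℝ) := by
      rw [← norm_pow, h1, Complex.norm_real, Real.norm_eq_abs]
      exact abs_of_pos hq0'
    have h3 : ((γ : ℝ)) ^ n = (q : ℝ) := by rw [hγℝ]; exact hγpow
    exact (pow_left_inj₀ (norm_nonneg _) hγ0.le hnne).mp (h2.trans h3.symm)
  -- |N(γ)| = γ^l
  have hNγ : ((|Algebra.norm ℚ γ| : ℚ) : ℝ) = (γ : ℝ) ^ l := by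
    have h : ‖(algebraMap ℚ ℂ) (Algebra.norm ℚ γ)‖ = (γ : ℝ) ^ l := by
      rw [hprod, norm_prod]
      simp only [habs]
      rw [Finset.prod_const, Finset.card_univ, hcard]
    rw [← h, eq_ratCast (algebraMap ℚ ℂ)]
    rw [show ((Algebra.norm ℚ γ : ℚ) : ℂ) = (((Algebra.norm ℚ γ : ℚ) : ℝ) : ℂ) by push_cast; ring]
    rw [Complex.norm_real, Real.norm_eq_abs]
    exact_mod_cast (Rat.cast_abs _).symm
  -- hence γ is rational
  have hgl : (γ : ℝ) ^ l = (γ : ℝ) ^ n * (γ : ℝ) := by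
    rw [← pow_succ]
    congr 1
    omega
  have h3 : ((γ : ℝ)) ^ n = (q : ℝ) := by rw [hγℝ]; exact hγpow
  have hγrat : (γ : ℝ) = ((|Algebra.norm ℚ γ| / q : ℚ) : ℝ) := by
    rw [Rat.cast_div, hNγ, hgl, h3]
    field_simp
  set r : ℚ := |Algebra.norm ℚ γ| / q with hr
  -- α = r * β contradicts linear independence
  have hαβ : (α : ℝ) = (r : ℝ) * (β : ℝ) := by
    have h := hγℝ
    rw [hγrat] at h
    field_simp at h
    linarith
  have hfin := Fintype.linearIndependent_iff.mp hind ![0, 1, -r] ?_ 1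
  · simp at hfin
  · rw [Fin.sum_univ_three]
    simp only [Matrix.cons_val_zero, Matrix.cons_val_one, Matrix.head_cons,
      Matrix.cons_val_two, Matrix.tail_cons]
    rw [Rat.smul_def, Rat.smul_def, Rat.smul_def, hαβ]
    push_cast
    ring
end

section
/- Let l ≥ 2 be an integer, let K be a subfield of ℝ that is a number field of degree l over ℚ, and let α_1, …, α_{l−1} ∈ K all lie in the interval (0,1) and be such that 1, α_1, …, α_{l−1} are linearly independent over ℚ. Let j be the (unique) index maximizing α_j / |N(α_j)|^{1/(l−1)}. Then the real numbers 1, ⟨1/α_j⟩, and ⟨α_i/α_j⟩ for i ≠ j are again linearly independent over ℚ, each of ⟨1/α_j⟩ and ⟨α_i/α_j⟩ (i ≠ j) lies in K ∩ [0,1); i.e., the Algebraic Jacobi-Perron transformation maps X_K into X_K. -/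
/-!
Dividing by `α j` is an injective `ℚ`-linear map of `ℝ`; it carries the family `1, α` (with `1`
and `α j` swapped) onto `1, 1/α j, α i/α j (i ≠ j)`, so the latter is again independent. Taking
fractional parts then only subtracts elements of `ℚ ∙ 1`, which leaves the `ℚ`-span, and hence
its dimension, unchanged; a family of fixed length is independent iff its span has that
dimension.
-/

open Submodule Set

theorem span_insert_le_of_sub_mem {R M : Type*} [Ring R] [AddCommGroup M] [Module R M]
    {ι : Type*} (u : M) {y z : ι → M} (h : ∀ i, y i - z i ∈ R ∙ u) :
    span R (insert u (range y)) ≤ span R (insert u (range z)) := by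
  have hu : R ∙ u ≤ span R (insert u (range z)) := span_mono (by simp)
  refine span_le.2 (insert_subset (subset_span (mem_insert u _)) ?_)
  rintro _ ⟨i, rfl⟩
  rw [← sub_add_cancel (y i) (z i)]
  exact add_mem (hu (h i)) (subset_span (mem_insert_of_mem u ⟨i, rfl⟩))

theorem span_insert_eq_of_sub_mem {R M : Type*} [Ring R] [AddCommGroup M] [Module R M]
    {ι : Type*} (u : M) {y z : ι → M} (h : ∀ i, y i - z i ∈ R ∙ u) :
    span R (insert u (range y)) = span R (insert u (range z)) :=
  le_antisymm (span_insert_le_of_sub_mem u h)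
    (span_insert_le_of_sub_mem u fun i => by simpa only [neg_sub] using neg_mem (h i))

theorem linearIndependent_cons_one_fract_iff {n : ℕ} (y : Fin n → ℝ) :
    LinearIndependent ℚ (Fin.cons 1 fun i => Int.fract (y i) : Fin (n + 1) → ℝ) ↔
      LinearIndependent ℚ (Fin.cons 1 y : Fin (n + 1) → ℝ) := by
  have hspan : span ℚ (insert (1 : ℝ) (range fun i => Int.fract (y i))) =
      span ℚ (insert 1 (range y)) :=
    span_insert_eq_of_sub_mem 1 fun i => by
      rw [Int.fract, sub_sub_cancel_left, mem_span_singleton]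
      exact ⟨-⌊y i⌋, by simp⟩
  rw [linearIndependent_iff_card_eq_finrank_span, linearIndependent_iff_card_eq_finrank_span,
    Fin.range_cons, Fin.range_cons, Set.finrank, Set.finrank, hspan]

theorem LinearIndependent.cons_one_div {K L : Type*} [Field K] [Field L] [Algebra K L] {n : ℕ}
    {β : Fin n → L} (hβ : LinearIndependent K (Fin.cons 1 β : Fin (n + 1) → L)) (j : Fin n) :
    LinearIndependent K
      (Fin.cons 1 fun i => if i = j then 1 / β j else β i / β j : Fin (n + 1) → L) := by
  have hβj : β j ≠ 0 := by simpa using hβ.ne_zero j.succ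
  have hscaled : LinearIndependent K fun k =>
      (β j)⁻¹ * (Fin.cons 1 β : Fin (n + 1) → L) (Equiv.swap 0 j.succ k) :=
    (hβ.comp _ (Equiv.swap 0 j.succ).injective).map' (LinearMap.mulLeft K (β j)⁻¹)
      (LinearMap.ker_eq_bot.2 (mul_right_injective₀ (inv_ne_zero hβj)))
  convert hscaled using 2 with k
  refine Fin.cases ?_ (fun i => ?_) k
  · simp [hβj]
  · by_cases hij : i = j
    · subst hij; simp
    · simp [Equiv.swap_apply_of_ne_of_ne (Fin.succ_ne_zero i) (Fin.succ_injective _ |>.ne hij),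
        hij, div_eq_inv_mul]

theorem Int.fract_mem {R S : Type*} [Ring R] [LinearOrder R] [FloorRing R] [SetLike S R]
    [SubringClass S R] {s : S} {x : R} (hx : x ∈ s) :
    Int.fract x ∈ s :=
  sub_mem hx (intCast_mem s _)

theorem stmt_1_general (n : ℕ)
    (K : IntermediateField ℚ ℝ)
    (α : Fin n → K)
    (hind : LinearIndependent ℚ (Fin.cons (1 : ℝ) (fun i => (α i : ℝ))))
    (j : Fin n) :
    LinearIndependent ℚ (Fin.cons (1 : ℝ) (fun i =>
        if i = j then Int.fract (1 / (α j : ℝ)) else Int.fract ((α i : ℝ) / (α j : ℝ)))) ∧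
    ∀ i : Fin n,
      (if i = j then Int.fract (1 / (α j : ℝ)) else Int.fract ((α i : ℝ) / (α j : ℝ))) ∈ K ∧
      0 ≤ (if i = j then Int.fract (1 / (α j : ℝ)) else Int.fract ((α i : ℝ) / (α j : ℝ))) ∧
      (if i = j then Int.fract (1 / (α j : ℝ)) else Int.fract ((α i : ℝ) / (α j : ℝ))) < 1 := by
  simp only [← apply_ite Int.fract]
  refine ⟨(linearIndependent_cons_one_fract_iff _).2 (hind.cons_one_div j),
    fun i => ⟨Int.fract_mem ?_, Int.fract_nonneg _, Int.fract_lt_one _⟩⟩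
  split_ifs
  · exact div_mem (one_mem K) (α j).2
  · exact div_mem (α i).2 (α j).2

/-- Let `K ⊆ ℝ` be a number field of degree `l = n + 1 ≥ 2` over `ℚ` and let
`α 0, …, α (n-1) ∈ K` lie in `(0,1)` with `1, α 0, …, α (n-1)` linearly independent over
`ℚ`.  If `j` is the (unique) index maximizing `α j / |N(α j)|^(1/(l-1))`, then the reals
`1, ⟨1/α j⟩, ⟨α i/α j⟩ (i ≠ j)` are again linearly independent over `ℚ` and each of
`⟨1/α j⟩`, `⟨α i/α j⟩` lies in `K ∩ [0,1)`: the Algebraic Jacobi-Perron transformation maps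
`X_K` into `X_K`.  (Here `⟨x⟩ = x - ⌊x⌋` is the fractional part, `Int.fract`.) -/
theorem stmt_1 (n : ℕ) (hn : 1 ≤ n)
    (K : IntermediateField ℚ ℝ) [FiniteDimensional ℚ K]
    (hdeg : Module.finrank ℚ K = n + 1)
    (α : Fin n → K)
    (hmem : ∀ i, 0 < (α i : ℝ) ∧ (α i : ℝ) < 1)
    (hind : LinearIndependent ℚ (Fin.cons (1 : ℝ) (fun i => (α i : ℝ))))
    (j : Fin n)
    (hj : ∀ i, i ≠ j →
      (α i : ℝ) / (|(Algebra.norm ℚ (α i) : ℚ)| : ℝ) ^ ((n : ℝ)⁻¹) <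
      (α j : ℝ) / (|(Algebra.norm ℚ (α j) : ℚ)| : ℝ) ^ ((n : ℝ)⁻¹)) :
    LinearIndependent ℚ (Fin.cons (1 : ℝ) (fun i =>
        if i = j then Int.fract (1 / (α j : ℝ)) else Int.fract ((α i : ℝ) / (α j : ℝ)))) ∧
    ∀ i : Fin n,
      (if i = j then Int.fract (1 / (α j : ℝ)) else Int.fract ((α i : ℝ) / (α j : ℝ))) ∈ K ∧
      0 ≤ (if i = j then Int.fract (1 / (α j : ℝ)) else Int.fract ((α i : ℝ) / (α j : ℝ))) ∧
      (if i = j then Int.fract (1 / (α j : ℝ)) else Int.fract ((α i : ℝ) / (α j : ℝ))) < 1 :=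
  stmt_1_general n K α hind j
end

section
/- Let a, b be integers with b ≤ 3a^2 − 3. Then the polynomial x^3 + 3ax^2 + bx + ab − 2a^3 + 1 is irreducible over ℚ, and it has exactly one real root γ with −a < γ < −a + 1. -/
/-!
Substituting `x = y - a` turns the cubic into the depressed cubic `y³ - n y + 1` with
`n = 3a² - b ≥ 3`. By the rational root theorem its only possible rational roots are `±1`, which
are roots only for `n = 2` and `n = 0`; a cubic without rational roots is irreducible, and
translation preserves irreducibility. On `[0, 1]` the depressed cubic is strictly decreasing,
because `(u³ - n u) - (v³ - n v) = (u - v)(u² + uv + v² - n)` with `u² + uv + v² < 3 ≤ n`, and it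
passes from `1` to `2 - n < 0`, so it has exactly one root in `(0, 1)`.
-/

open Polynomial Set

namespace Polynomial

theorem irreducible_comp_X_add_C_iff {R : Type*} [CommRing R] (p : R[X]) (r : R) :
    Irreducible (p.comp (X + C r)) ↔ Irreducible p := by
  rw [← taylor_apply]
  exact MulEquiv.irreducible_iff (taylorEquiv r)

theorem X_pow_three_sub_C_mul_X_add_one_comp_X_add_C {R : Type*} [CommRing R] (a b : R) :
    (X ^ 3 - C (3 * a ^ 2 - b) * X + 1).comp (X + C a) =
      X ^ 3 + C (3 * a) * X ^ 2 + C b * X + C (a * b - 2 * a ^ 3 + 1) := by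
  simp only [sub_comp, add_comp, mul_comp, pow_comp, X_comp, C_comp, one_comp, ofNat_comp,
    map_add, map_sub, map_mul, map_pow, map_one, C_ofNat]
  ring

theorem irreducible_X_pow_three_sub_C_mul_X_add_one {n : ℤ} (h0 : n ≠ 0) (h2 : n ≠ 2) :
    Irreducible (X ^ 3 - C (n : ℚ) * X + 1) := by
  have hdeg : (X ^ 3 - C (n : ℚ) * X + 1).natDegree = 3 := by compute_degree!
  refine irreducible_of_degree_le_three_of_not_isRoot (by rw [hdeg]; decide) fun x hx => ?_
  have hmonic : (X ^ 3 - C n * X + 1 : ℤ[X]).Monic := by monicity!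
  obtain ⟨m, rfl, hm_dvd⟩ :=
    exists_integer_of_is_root_of_monic hmonic (r := x) (by simpa using hx)
  have hm : m ^ 3 - n * m + 1 = 0 := by
    exact_mod_cast (by simpa using hx : (m : ℚ) ^ 3 - n * m + 1 = 0)
  rcases Int.isUnit_iff.mp (isUnit_of_dvd_one (by simpa using hm_dvd)) with rfl | rfl <;> grind

end Polynomial

theorem strictAntiOn_pow_three_sub_mul_add_one {n : ℝ} (hn : 3 ≤ n) :
    StrictAntiOn (fun t : ℝ => t ^ 3 - n * t + 1) (Icc 0 1) := by
  intro u ⟨hu0, hu1⟩ v ⟨hv0, hv1⟩ huv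
  have : u ^ 2 + u * v + v ^ 2 < n := by nlinarith
  nlinarith

theorem existsUnique_pow_three_sub_mul_add_one_eq_zero_mem_Ioo {n : ℝ} (hn : 3 ≤ n) :
    ∃! t, t ∈ Ioo (0 : ℝ) 1 ∧ t ^ 3 - n * t + 1 = 0 := by
  set f : ℝ → ℝ := fun t => t ^ 3 - n * t + 1
  have hcont : ContinuousOn f (Icc 0 1) := by fun_prop
  obtain ⟨t, ht, hroot⟩ := intermediate_value_Ioo' zero_le_one hcont
    (show (0 : ℝ) ∈ Ioo (f 1) (f 0) by constructor <;> norm_num [f]; linarith)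
  refine ⟨t, ⟨ht, hroot⟩, fun s ⟨hs, hsroot⟩ => ?_⟩
  exact (strictAntiOn_pow_three_sub_mul_add_one hn).injOn (Ioo_subset_Icc_self hs)
    (Ioo_subset_Icc_self ht) (hsroot.trans hroot.symm)

/-- For integers `a, b` with `b ≤ 3a^2 - 3`, the polynomial
`x^3 + 3ax^2 + bx + ab - 2a^3 + 1` is irreducible over `ℚ` and has exactly one real root
`γ` with `-a < γ < -a + 1`. -/
theorem stmt_10 (a b : ℤ) (hb : b ≤ 3 * a ^ 2 - 3) :
    Irreducible (X ^ 3 + C (3 * (a : ℚ)) * X ^ 2 + C (b : ℚ) * X +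
      C ((a : ℚ) * (b : ℚ) - 2 * (a : ℚ) ^ 3 + 1)) ∧
    ∃! γ : ℝ, (-(a : ℝ) < γ ∧ γ < -(a : ℝ) + 1) ∧
      γ ^ 3 + 3 * (a : ℝ) * γ ^ 2 + (b : ℝ) * γ +
        ((a : ℝ) * (b : ℝ) - 2 * (a : ℝ) ^ 3 + 1) = 0 := by
  set n : ℤ := 3 * a ^ 2 - b with hn
  have hn3 : 3 ≤ n := by omega
  constructor
  · rw [← X_pow_three_sub_C_mul_X_add_one_comp_X_add_C, irreducible_comp_X_add_C_iff]
    exact_mod_cast irreducible_X_pow_three_sub_C_mul_X_add_one (n := n) (by omega) (by omega)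
  · have hshift (γ : ℝ) : γ ^ 3 + 3 * (a : ℝ) * γ ^ 2 + (b : ℝ) * γ +
        ((a : ℝ) * (b : ℝ) - 2 * (a : ℝ) ^ 3 + 1) = (γ + a) ^ 3 - n * (γ + a) + 1 := by
      push_cast [hn]; ring
    obtain ⟨t, ⟨ht, hroot⟩, huniq⟩ :=
      existsUnique_pow_three_sub_mul_add_one_eq_zero_mem_Ioo (n := n) (by exact_mod_cast hn3)
    refine ⟨t - a, ⟨⟨by linarith [ht.1], by linarith [ht.2]⟩, by rwa [hshift, sub_add_cancel]⟩, ?_⟩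
    rintro γ ⟨⟨hγ₁, hγ₂⟩, hγ⟩
    have := huniq (γ + a) ⟨⟨by linarith, by linarith⟩, by rwa [← hshift]⟩
    linarith
end

section
/- Let a, b be integers with b ≤ 3a^2 − 3, and let γ be the real root of x^3 + 3ax^2 + bx + ab − 2a^3 + 1 = 0 satisfying −a < γ < −a + 1. Let K = ℚ(γ), a cubic number field, viewed as a subfield of ℝ. Define the Algebraic Jacobi-Perron transformation T_K on pairs (α, β) of elements of K ∩ (0,1) with 1, α, β linearly independent over ℚ by: T_K(α, β) = (⟨1/α⟩, ⟨β/α⟩) if α/√|N(α)| > β/√|N(β)|, and T_K(α, β) = (⟨α/β⟩, ⟨1/β⟩) if α/√|N(α)| < β/√|N(β)|. Then the orbit of (γ − ⌊γ⌋, (γ − ⌊γ⌋)^2) under T_K is eventually periodic with period 4: there exists N such that for all n ≥ N, T_K^{n+4}(γ − ⌊γ⌋, (γ − ⌊γ⌋)^2) = T_K^{n}(γ − ⌊γ⌋, (γ − ⌊γ⌋)^2). -/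
attribute [local instance] Classical.propDecidable

/-- The field norm from `K` to `ℚ` of a real number `x`, when `x ∈ K` (junk value `0`
otherwise), for `K` a subfield of `ℝ`. -/
noncomputable def ajpaNorm (K : IntermediateField ℚ ℝ) (x : ℝ) : ℚ :=
  if h : x ∈ K then Algebra.norm ℚ (⟨x, h⟩ : K) else 0

/-- One step of the Algebraic Jacobi-Perron transformation `T_K` on `n`-tuples, where the
normalizing exponent is `1/n` (for a cubic field, `n = 2` and the normalization is
`x ↦ x / √|N(x)|`): if there is a (necessarily unique) index `j` strictly maximizing
`v j / |N(v j)|^(1/n)`, replace the `j`-th entry by the fractional part `⟨1 / v j⟩` and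
each other entry `v i` by `⟨v i / v j⟩`.  For `n = 2` this is exactly
`T_K(α, β) = (⟨1/α⟩, ⟨β/α⟩)` if `α/√|N(α)| > β/√|N(β)|` and
`T_K(α, β) = (⟨α/β⟩, ⟨1/β⟩)` if `α/√|N(α)| < β/√|N(β)|`; tuples with no strict maximizer
are left unchanged (this case never occurs on the domain `X_K`). -/
noncomputable def ajpaStep (K : IntermediateField ℚ ℝ) {n : ℕ} (v : Fin n → ℝ) :
    Fin n → ℝ :=
  if h : ∃ j : Fin n, ∀ i : Fin n, i ≠ j →
      v i / (|ajpaNorm K (v i)| : ℝ) ^ ((n : ℝ)⁻¹) <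
      v j / (|ajpaNorm K (v j)| : ℝ) ^ ((n : ℝ)⁻¹) then
    fun i => if i = h.choose then Int.fract (1 / v h.choose)
             else Int.fract (v i / v h.choose)
  else v

/-!
Write `α = γ - ⌊γ⌋ = γ + a` and `d = 3a² - b - 2 ≥ 1`. Then `α ∈ (0, 1)` is a root of the
irreducible polynomial `X³ - (d + 2) X + 1`, so the norm of `x₀ + x₁ α + x₂ α²` is an explicit
cubic form in `x₀, x₁, x₂`. With `β = 1 - α - α²` the orbit is
`(α, α²) ↦ (1 - α², α) ↦ (α² / (1 - α²), α / (1 - α²)) ↦ (α, β) ↦ ((1 - α) / d, (1 - α²) / d)`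
`↦ (β, α) ↦ ((1 - α²) / d, (1 - α) / d) ↦ (α, β)`: at every step the comparison of
`x / √|N(x)|` becomes a polynomial inequality in `α < 1/2` once the norms are known, and the
integer parts are read off from `α³ + 1 = (d + 2) α`.
-/

open IntermediateField Polynomial

noncomputable def ajpaWeight (K : IntermediateField ℚ ℝ) (x : ℝ) : ℝ :=
  x / √|(ajpaNorm K x : ℝ)|

theorem ajpaNorm_coe (K : IntermediateField ℚ ℝ) (x : K) :
    ajpaNorm K x = Algebra.norm ℚ x := by
  rw [ajpaNorm, dif_pos x.2]

theorem ajpaStep_of_forall_lt (K : IntermediateField ℚ ℝ) {n : ℕ} {v : Fin n → ℝ} {j : Fin n}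
    (h : ∀ i, i ≠ j → v i / (|ajpaNorm K (v i)| : ℝ) ^ ((n : ℝ)⁻¹) <
      v j / (|ajpaNorm K (v j)| : ℝ) ^ ((n : ℝ)⁻¹)) :
    ajpaStep K v = fun i => if i = j then Int.fract (1 / v j) else Int.fract (v i / v j) := by
  have hex : ∃ j, ∀ i, i ≠ j → v i / (|ajpaNorm K (v i)| : ℝ) ^ ((n : ℝ)⁻¹) <
      v j / (|ajpaNorm K (v j)| : ℝ) ^ ((n : ℝ)⁻¹) := ⟨j, h⟩
  have hchoose : hex.choose = j := by
    by_contra hne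
    exact lt_asymm (h _ hne) (hex.choose_spec j (Ne.symm hne))
  rw [ajpaStep, dif_pos hex, hchoose]

theorem ajpaStep_pair_of_weight_lt {K : IntermediateField ℚ ℝ} {x y : ℝ}
    (h : ajpaWeight K y < ajpaWeight K x) :
    ajpaStep K ![x, y] = ![Int.fract (1 / x), Int.fract (y / x)] := by
  rw [ajpaStep_of_forall_lt K (j := 0) fun i hi => ?_]
  · ext i; fin_cases i <;> simp
  · fin_cases i
    · exact absurd rfl hi
    · simpa [ajpaWeight, Real.sqrt_eq_rpow] using h

theorem ajpaStep_pair_swap_of_weight_lt {K : IntermediateField ℚ ℝ} {x y : ℝ}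
    (h : ajpaWeight K y < ajpaWeight K x) :
    ajpaStep K ![y, x] = ![Int.fract (y / x), Int.fract (1 / x)] := by
  rw [ajpaStep_of_forall_lt K (j := 1) fun i hi => ?_]
  · ext i; fin_cases i <;> simp
  · fin_cases i
    · simpa [ajpaWeight, Real.sqrt_eq_rpow] using h
    · exact absurd rfl hi

theorem ajpaWeight_lt_of_sq_mul_lt {K : IntermediateField ℚ ℝ} {x y : ℝ} (hx : 0 ≤ x)
    (hNx : ajpaNorm K x ≠ 0)
    (h : y ^ 2 * |(ajpaNorm K x : ℝ)| < x ^ 2 * |(ajpaNorm K y : ℝ)|) :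
    ajpaWeight K y < ajpaWeight K x := by
  have hpx : 0 < |(ajpaNorm K x : ℝ)| := abs_pos.mpr (by exact_mod_cast hNx)
  have hpy : 0 < |(ajpaNorm K y : ℝ)| := by
    by_contra hle
    have : |(ajpaNorm K y : ℝ)| = 0 := le_antisymm (not_lt.mp hle) (abs_nonneg _)
    rw [this, mul_zero] at h
    exact h.not_ge (by positivity)
  refine lt_of_pow_lt_pow_left₀ 2 (div_nonneg hx (Real.sqrt_nonneg _)) ?_
  rw [ajpaWeight, ajpaWeight, div_pow, div_pow, Real.sq_sqrt hpx.le, Real.sq_sqrt hpy.le,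
    div_lt_div_iff₀ hpy hpx]
  exact h

theorem IntermediateField.adjoin_simple_add_intCast {F E : Type*} [Field F] [Field E]
    [Algebra F E] (x : E) (m : ℤ) : F⟮x + m⟯ = F⟮x⟯ := by
  refine le_antisymm (adjoin_simple_le_iff.mpr ?_) (adjoin_simple_le_iff.mpr ?_)
  · exact add_mem (mem_adjoin_simple_self F x) (intCast_mem _ m)
  · simpa using sub_mem (mem_adjoin_simple_self F (x + m)) (intCast_mem _ m)

theorem Function.iterate_add_eq_of_isPeriodicPt {α : Type*} {f : α → α} {x : α} {m p n : ℕ}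
    (hper : Function.IsPeriodicPt f p (f^[m] x)) (hn : m ≤ n) : f^[n + p] x = f^[n] x := by
  obtain ⟨k, rfl⟩ := Nat.exists_eq_add_of_le hn
  rw [show m + k + p = p + k + m by ring, Function.iterate_add_apply, Function.iterate_add_apply,
    (hper.apply_iterate k).eq, ← Function.iterate_add_apply, add_comm]

section CubicNorm

variable {K L : Type*} [Field K] [Field L] [Algebra K L] {α : L} {c : K}

theorem Polynomial.natDegree_X_pow_three_sub_C_mul_X_add_one (c : K) :
    (X ^ 3 - C c * X + 1 : K[X]).natDegree = 3 := by
  compute_degree!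

theorem gen_pow_three_of_minpoly_eq (hmin : minpoly K α = X ^ 3 - C c * X + 1) :
    AdjoinSimple.gen K α ^ 3 = algebraMap K K⟮α⟯ c * AdjoinSimple.gen K α - 1 := by
  have h := minpoly.aeval K (AdjoinSimple.gen K α)
  rw [minpoly_gen, hmin] at h
  simp only [map_add, map_sub, map_mul, map_pow, aeval_X, aeval_C, map_one] at h
  linear_combination h

theorem norm_of_minpoly_eq_cubic (hmin : minpoly K α = X ^ 3 - C c * X + 1) (x₀ x₁ x₂ : K) :
    Algebra.norm K (algebraMap K K⟮α⟯ x₀ + algebraMap K K⟮α⟯ x₁ * AdjoinSimple.gen K α +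
        algebraMap K K⟮α⟯ x₂ * AdjoinSimple.gen K α ^ 2) =
      x₀ ^ 3 - x₁ ^ 3 + x₂ ^ 3 + 3 * x₀ * x₁ * x₂ - c * x₀ * x₁ ^ 2 + c * x₁ * x₂ ^ 2
        + 2 * c * x₀ ^ 2 * x₂ + c ^ 2 * x₀ * x₂ ^ 2 := by
  have hint : IsIntegral K α := minpoly.ne_zero_iff.mp (by
    rw [hmin]; exact Monic.ne_zero (by monicity!))
  set pb := adjoin.powerBasis hint
  have hdim : pb.dim = 3 := by
    rw [adjoin.powerBasis_dim, hmin, natDegree_X_pow_three_sub_C_mul_X_add_one]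
  set A := AdjoinSimple.gen K α
  set F := algebraMap K K⟮α⟯
  set b := pb.basis.reindex (finCongr hdim)
  have hb : ∀ i : Fin 3, b i = A ^ (i : ℕ) := fun i => by
    rw [Module.Basis.reindex_apply, pb.basis_eq_pow]; rfl
  have hrepr : ∀ (y₀ y₁ y₂ : K) (i : Fin 3),
      b.repr (F y₀ + F y₁ * A + F y₂ * A ^ 2) i = ![y₀, y₁, y₂] i := fun y₀ y₁ y₂ i => by
    have hsum : F y₀ + F y₁ * A + F y₂ * A ^ 2 = ∑ k : Fin 3, ![y₀, y₁, y₂] k • b k := by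
      simp [Fin.sum_univ_three, hb, Algebra.smul_def, F]
    rw [hsum, b.repr_sum_self]
  have hA3 : A ^ 3 = F c * A - 1 := gen_pow_three_of_minpoly_eq hmin
  set x := F x₀ + F x₁ * A + F x₂ * A ^ 2
  have hcol₀ : x * b 0 = F x₀ + F x₁ * A + F x₂ * A ^ 2 := by simp [hb, x]
  have hcol₁ : x * b 1 = F (-x₂) + F (x₀ + c * x₂) * A + F x₁ * A ^ 2 := by
    simp only [hb, Fin.val_one, pow_one, map_neg, map_add, map_mul, x]
    linear_combination F x₂ * hA3
  have hcol₂ : x * b 2 = F (-x₁) + F (c * x₁ - x₂) * A + F (x₀ + c * x₂) * A ^ 2 := by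
    simp only [hb, Fin.val_two, map_neg, map_add, map_sub, map_mul, x]
    linear_combination (F x₁ + F x₂ * A) * hA3
  rw [Algebra.norm_eq_matrix_det b, Matrix.det_fin_three]
  simp only [Algebra.leftMulMatrix_eq_repr_mul, hcol₀, hcol₁, hcol₂, hrepr, Matrix.cons_val_zero,
    Matrix.cons_val_one, Matrix.cons_val]
  ring

end CubicNorm

theorem Polynomial.irreducible_X_pow_three_sub_C_mul_X_add_one_s11 {e : ℤ} (h0 : e ≠ 0)
    (h2 : e ≠ 2) : Irreducible (X ^ 3 - C (e : ℚ) * X + 1) := by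
  refine irreducible_of_degree_le_three_of_not_isRoot
    (by rw [natDegree_X_pow_three_sub_C_mul_X_add_one]; decide) fun r hr => ?_
  have hr : r ^ 3 - e * r + 1 = 0 := by simpa using hr
  -- a rational root of a monic integer polynomial is an integer, and then it divides `1`
  have hint : IsIntegral ℤ r := ⟨(X ^ 3 - C e * X + 1 : ℤ[X]), by monicity!, by
    simpa only [eval₂_add, eval₂_sub, eval₂_mul, eval₂_X_pow, eval₂_C, eval₂_X, eval₂_one,
      algebraMap_int_eq, Int.coe_castRingHom] using hr⟩
  obtain ⟨m, rfl⟩ := IsIntegrallyClosed.isIntegral_iff.mp hint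
  have hm : m * (e - m ^ 2) = 1 := by
    have : ((m ^ 3 - e * m + 1 : ℤ) : ℚ) = 0 := by simpa using hr
    linear_combination -(Int.cast_eq_zero.mp this)
  rcases Int.eq_one_or_neg_one_of_mul_eq_one' hm with ⟨rfl, _⟩ | ⟨rfl, _⟩ <;> omega

theorem ajpaNorm_of_minpoly_eq_cubic {α : ℝ} {c : ℚ} (hmin : minpoly ℚ α = X ^ 3 - C c * X + 1)
    {x : ℝ} (x₀ x₁ x₂ : ℚ) (hx : x₀ + x₁ * α + x₂ * α ^ 2 = x) :
    ajpaNorm ℚ⟮α⟯ x =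
      x₀ ^ 3 - x₁ ^ 3 + x₂ ^ 3 + 3 * x₀ * x₁ * x₂ - c * x₀ * x₁ ^ 2 + c * x₁ * x₂ ^ 2
        + 2 * c * x₀ ^ 2 * x₂ + c ^ 2 * x₀ * x₂ ^ 2 := by
  rw [← norm_of_minpoly_eq_cubic hmin, ← hx]
  -- `ajpaNorm` sees `ℚ⟮α⟯` through the `ℚ`-algebra structure of a division ring of
  -- characteristic zero; it agrees with the intermediate-field one since `Algebra ℚ _` is a
  -- subsingleton.
  convert ajpaNorm_coe ℚ⟮α⟯ _ using 3
  · simp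
  · rfl
  · exact Subsingleton.elim _ _

structure IsSmallCubicRoot (d : ℤ) (α : ℝ) : Prop where
  d_pos : 0 < d
  pos : 0 < α
  lt_one : α < 1
  cube_add_one : α ^ 3 + 1 = (d + 2) * α

namespace IsSmallCubicRoot

variable {d : ℤ} {α : ℝ}

theorem minpoly_eq (h : IsSmallCubicRoot d α) :
    minpoly ℚ α = X ^ 3 - C ((d : ℚ) + 2) * X + 1 := by
  have hirr : Irreducible (X ^ 3 - C (((d + 2 : ℤ)) : ℚ) * X + 1) :=
    irreducible_X_pow_three_sub_C_mul_X_add_one_s11 (by linarith [h.d_pos]) (by linarith [h.d_pos])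
  push_cast at hirr
  refine (minpoly.eq_of_irreducible_of_monic hirr ?_ (by monicity!)).symm
  simp only [map_add, map_sub, map_mul, map_pow, aeval_X, map_one, map_ofNat,
    map_intCast]
  linear_combination h.cube_add_one

theorem ajpaNorm_eq (h : IsSmallCubicRoot d α) {x : ℝ} (x₀ x₁ x₂ : ℚ)
    (hx : x₀ + x₁ * α + x₂ * α ^ 2 = x) :
    ajpaNorm ℚ⟮α⟯ x =
      x₀ ^ 3 - x₁ ^ 3 + x₂ ^ 3 + 3 * x₀ * x₁ * x₂ - (d + 2) * x₀ * x₁ ^ 2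
        + (d + 2) * x₁ * x₂ ^ 2 + 2 * (d + 2) * x₀ ^ 2 * x₂ + (d + 2) ^ 2 * x₀ * x₂ ^ 2 :=
  ajpaNorm_of_minpoly_eq_cubic h.minpoly_eq x₀ x₁ x₂ hx

theorem mul_lt_one (h : IsSmallCubicRoot d α) : ((d : ℝ) + 1) * α < 1 := by
  have := h.pos; have := h.lt_one
  nlinarith [h.cube_add_one, mul_pos (mul_pos h.pos h.pos) (sub_pos.mpr h.lt_one)]

theorem lt_half (h : IsSmallCubicRoot d α) : α < 1 / 2 := by
  have : (1 : ℝ) ≤ d := by exact_mod_cast h.d_pos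
  nlinarith [h.mul_lt_one, h.pos]

theorem one_sub_sub_pos (h : IsSmallCubicRoot d α) : 0 < 1 - α - α ^ 2 := by
  nlinarith [h.lt_half, h.pos]

theorem one_sub_sq_pos (h : IsSmallCubicRoot d α) : 0 < 1 - α ^ 2 := by
  nlinarith [h.lt_half, h.pos]

theorem ajpaNorm_self (h : IsSmallCubicRoot d α) : ajpaNorm ℚ⟮α⟯ α = -1 := by
  rw [h.ajpaNorm_eq 0 1 0 (by push_cast; ring)]; norm_num

theorem ajpaWeight_sq_lt (h : IsSmallCubicRoot d α) :
    ajpaWeight ℚ⟮α⟯ (α ^ 2) < ajpaWeight ℚ⟮α⟯ α := by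
  have hN : ajpaNorm ℚ⟮α⟯ (α ^ 2) = 1 := by
    rw [h.ajpaNorm_eq 0 0 1 (by push_cast; ring)]; norm_num
  refine ajpaWeight_lt_of_sq_mul_lt h.pos.le (by simp [h.ajpaNorm_self]) ?_
  rw [h.ajpaNorm_self, hN, Rat.cast_neg, Rat.cast_one, abs_neg, abs_one, mul_one, mul_one]
  have hsq : α ^ 2 < 1 := by nlinarith [h.pos, h.lt_one]
  nlinarith [mul_lt_mul_of_pos_left hsq (pow_pos h.pos 2)]

theorem ajpaWeight_lt_one_sub_sq (h : IsSmallCubicRoot d α) :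
    ajpaWeight ℚ⟮α⟯ α < ajpaWeight ℚ⟮α⟯ (1 - α ^ 2) := by
  have hN : ajpaNorm ℚ⟮α⟯ (1 - α ^ 2) = d * (d + 2) := by
    rw [h.ajpaNorm_eq 1 0 (-1) (by push_cast; ring)]; ring
  have hd : (0 : ℝ) < d := by exact_mod_cast h.d_pos
  have hdQ : (0 : ℚ) < d := by exact_mod_cast h.d_pos
  refine ajpaWeight_lt_of_sq_mul_lt h.one_sub_sq_pos.le (by rw [hN]; positivity) ?_
  rw [h.ajpaNorm_self, hN]
  push_cast
  rw [abs_of_pos (by positivity), abs_neg, abs_one, mul_one]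
  have hsq : (1 - α ^ 2) ^ 2 = 1 - α + d * α ^ 2 := by linear_combination α * h.cube_add_one
  nlinarith [h.mul_lt_one, mul_lt_mul_of_pos_left h.mul_lt_one (mul_pos hd h.pos)]

theorem ajpaWeight_div_lt (h : IsSmallCubicRoot d α) :
    ajpaWeight ℚ⟮α⟯ (α ^ 2 / (1 - α ^ 2)) < ajpaWeight ℚ⟮α⟯ (α / (1 - α ^ 2)) := by
  have hdQ : (0 : ℚ) < d := by exact_mod_cast h.d_pos
  have hd : (0 : ℝ) < d := by exact_mod_cast h.d_pos
  have hd₂ : (d : ℝ) + 2 ≠ 0 := by positivity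
  have h1 := h.one_sub_sq_pos
  have hN₁ : ajpaNorm ℚ⟮α⟯ (α ^ 2 / (1 - α ^ 2)) = 1 / (d * (d + 2)) := by
    rw [h.ajpaNorm_eq (1 / (d * (d + 2))) (-(1 / (d * (d + 2)))) (-((d + 1) / (d * (d + 2))))]
    · field_simp; ring
    · rw [eq_div_iff h1.ne']
      push_cast
      field_simp
      linear_combination (1 + (d + 1) * α) * h.cube_add_one
  have hN₂ : ajpaNorm ℚ⟮α⟯ (α / (1 - α ^ 2)) = -(1 / (d * (d + 2))) := by
    rw [h.ajpaNorm_eq ((d + 1) / (d * (d + 2))) (-((d + 1) / (d * (d + 2))))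
      (-(1 / (d * (d + 2))))]
    · field_simp; ring
    · rw [eq_div_iff h1.ne']
      push_cast
      field_simp
      linear_combination (d + 1 + α) * h.cube_add_one
  refine ajpaWeight_lt_of_sq_mul_lt (by have := h.pos; positivity)
    (by rw [hN₂]; exact neg_ne_zero.mpr (by positivity)) ?_
  rw [hN₁, hN₂, Rat.cast_neg, abs_neg]
  gcongr
  nlinarith [h.pos, h.lt_one]

theorem ajpaWeight_lt_one_sub_sub (h : IsSmallCubicRoot d α) :
    ajpaWeight ℚ⟮α⟯ α < ajpaWeight ℚ⟮α⟯ (1 - α - α ^ 2) := by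
  have hd : (0 : ℝ) < d := by exact_mod_cast h.d_pos
  have hdQ : (0 : ℚ) < d := by exact_mod_cast h.d_pos
  have hN : ajpaNorm ℚ⟮α⟯ (1 - α - α ^ 2) = d ^ 2 := by
    rw [h.ajpaNorm_eq 1 (-1) (-1) (by push_cast; ring)]; ring
  refine ajpaWeight_lt_of_sq_mul_lt h.one_sub_sub_pos.le (by rw [hN]; positivity) ?_
  rw [h.ajpaNorm_self, hN]
  push_cast
  rw [abs_of_pos (by positivity), abs_neg, abs_one, mul_one]
  -- the cubic gives `d α = (1 - α)(1 - α - α²) < 1 - α - α²`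
  have hβ := h.one_sub_sub_pos
  nlinarith [h.cube_add_one, mul_pos h.pos hβ, mul_pos hd h.pos]

theorem ajpaWeight_div_d_lt (h : IsSmallCubicRoot d α) :
    ajpaWeight ℚ⟮α⟯ ((1 - α ^ 2) / d) < ajpaWeight ℚ⟮α⟯ ((1 - α) / d) := by
  have hd : (0 : ℝ) < d := by exact_mod_cast h.d_pos
  have hdQ : (0 : ℚ) < d := by exact_mod_cast h.d_pos
  have hN₁ : ajpaNorm ℚ⟮α⟯ ((1 - α) / d) = -(1 / d ^ 2) := by
    rw [h.ajpaNorm_eq (1 / d) (-(1 / d)) 0 (by push_cast; field_simp; ring)]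
    field_simp; ring
  have hN₂ : ajpaNorm ℚ⟮α⟯ ((1 - α ^ 2) / d) = (d + 2) / d ^ 2 := by
    rw [h.ajpaNorm_eq (1 / d) 0 (-(1 / d)) (by push_cast; field_simp; ring)]
    field_simp; ring
  have h1 : 0 < 1 - α := by linarith [h.lt_one]
  refine ajpaWeight_lt_of_sq_mul_lt (by positivity)
    (by rw [hN₁]; exact neg_ne_zero.mpr (by positivity)) ?_
  rw [hN₁, hN₂]
  push_cast
  rw [abs_neg, abs_of_pos (by positivity), abs_of_pos (by positivity)]
  rw [div_pow, div_pow, div_mul_div_comm, div_mul_div_comm, div_lt_div_iff_of_pos_right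
    (by positivity)]
  have hsq : (1 + α) ^ 2 < d + 2 := by
    have : (1 : ℝ) ≤ d := by exact_mod_cast h.d_pos
    nlinarith [h.lt_half, h.pos]
  nlinarith [mul_lt_mul_of_pos_left hsq (pow_pos h1 2)]

theorem fract_div_one_sub_sub (h : IsSmallCubicRoot d α) :
    Int.fract (α / (1 - α - α ^ 2)) = (1 - α) / d := by
  have hd : (0 : ℝ) < d := by exact_mod_cast h.d_pos
  have hd₁ : (1 : ℝ) ≤ d := by exact_mod_cast h.d_pos
  rw [Int.fract_eq_iff]
  refine ⟨div_nonneg (by linarith [h.lt_one]) hd.le, (div_lt_one hd).mpr (by linarith [h.pos]),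
    0, ?_⟩
  have := h.one_sub_sub_pos
  field_simp
  linear_combination -h.cube_add_one

theorem fract_one_div_one_sub_sub (h : IsSmallCubicRoot d α) :
    Int.fract (1 / (1 - α - α ^ 2)) = (1 - α ^ 2) / d := by
  have hd : (0 : ℝ) < d := by exact_mod_cast h.d_pos
  have hd₁ : (1 : ℝ) ≤ d := by exact_mod_cast h.d_pos
  rw [Int.fract_eq_iff]
  refine ⟨div_nonneg h.one_sub_sq_pos.le hd.le, (div_lt_one hd).mpr (by nlinarith [h.pos]),
    1, ?_⟩
  have := h.one_sub_sub_pos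
  field_simp
  linear_combination (-1 - α) * h.cube_add_one

theorem fract_one_div_div (h : IsSmallCubicRoot d α) :
    Int.fract (1 / ((1 - α) / d)) = 1 - α - α ^ 2 := by
  rw [Int.fract_eq_iff]
  refine ⟨h.one_sub_sub_pos.le, by nlinarith [h.pos], d, ?_⟩
  have : 1 - α ≠ 0 := by linarith [h.lt_one]
  field_simp
  linear_combination -h.cube_add_one

theorem fract_div_div (h : IsSmallCubicRoot d α) :
    Int.fract ((1 - α ^ 2) / d / ((1 - α) / d)) = α := by
  have hd : (0 : ℝ) < d := by exact_mod_cast h.d_pos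
  rw [Int.fract_eq_iff]
  refine ⟨h.pos.le, h.lt_one, 1, ?_⟩
  have : 1 - α ≠ 0 := by linarith [h.lt_one]
  field_simp
  ring

theorem ajpaStep_self_sq (h : IsSmallCubicRoot d α) :
    ajpaStep ℚ⟮α⟯ ![α, α ^ 2] = ![1 - α ^ 2, α] := by
  rw [ajpaStep_pair_of_weight_lt h.ajpaWeight_sq_lt]
  congr
  · rw [Int.fract_eq_iff]
    refine ⟨h.one_sub_sq_pos.le, by nlinarith [h.pos], d + 1, ?_⟩
    field_simp [h.pos.ne']
    push_cast
    linear_combination h.cube_add_one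
  · rw [pow_two, mul_div_cancel_right₀ _ h.pos.ne', Int.fract_eq_self]
    exact ⟨h.pos.le, h.lt_one⟩

theorem ajpaStep_one_sub_sq_self (h : IsSmallCubicRoot d α) :
    ajpaStep ℚ⟮α⟯ ![1 - α ^ 2, α] = ![α ^ 2 / (1 - α ^ 2), α / (1 - α ^ 2)] := by
  have h1 := h.one_sub_sq_pos
  have hβ := h.one_sub_sub_pos
  rw [ajpaStep_pair_of_weight_lt h.ajpaWeight_lt_one_sub_sq]
  congr
  · rw [Int.fract_eq_iff]
    refine ⟨by have := h.pos; positivity, (div_lt_one h1).mpr (by nlinarith [h.lt_half, h.pos]),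
      1, ?_⟩
    field_simp
    ring
  · rw [Int.fract_eq_self]
    exact ⟨by have := h.pos; positivity, (div_lt_one h1).mpr (by linarith)⟩

theorem ajpaStep_div_one_sub_sq (h : IsSmallCubicRoot d α) :
    ajpaStep ℚ⟮α⟯ ![α ^ 2 / (1 - α ^ 2), α / (1 - α ^ 2)] = ![α, 1 - α - α ^ 2] := by
  have h1 := h.one_sub_sq_pos
  rw [ajpaStep_pair_swap_of_weight_lt h.ajpaWeight_div_lt]
  congr
  · rw [div_div_div_cancel_right₀ h1.ne', pow_two, mul_div_cancel_right₀ _ h.pos.ne',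
      Int.fract_eq_self]
    exact ⟨h.pos.le, h.lt_one⟩
  · rw [Int.fract_eq_iff]
    refine ⟨h.one_sub_sub_pos.le, by nlinarith [h.pos], d + 1, ?_⟩
    field_simp [h.pos.ne']
    push_cast
    linear_combination h.cube_add_one

theorem iterate_ajpaStep_three (h : IsSmallCubicRoot d α) :
    (ajpaStep ℚ⟮α⟯)^[3] ![α, α ^ 2] = ![α, 1 - α - α ^ 2] := by
  simp only [Function.iterate_succ_apply', Function.iterate_zero_apply, h.ajpaStep_self_sq,
    h.ajpaStep_one_sub_sq_self, h.ajpaStep_div_one_sub_sq]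

theorem isPeriodicPt_ajpaStep (h : IsSmallCubicRoot d α) :
    Function.IsPeriodicPt (ajpaStep ℚ⟮α⟯) 4 ![α, 1 - α - α ^ 2] := by
  have step₁ := ajpaStep_pair_swap_of_weight_lt h.ajpaWeight_lt_one_sub_sub
  have step₂ := ajpaStep_pair_of_weight_lt h.ajpaWeight_div_d_lt
  have step₃ := ajpaStep_pair_of_weight_lt h.ajpaWeight_lt_one_sub_sub
  have step₄ := ajpaStep_pair_swap_of_weight_lt h.ajpaWeight_div_d_lt
  simp only [h.fract_div_one_sub_sub, h.fract_one_div_one_sub_sub, h.fract_one_div_div,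
    h.fract_div_div] at step₁ step₂ step₃ step₄
  simp only [Function.IsPeriodicPt, Function.IsFixedPt, Function.iterate_succ_apply',
    Function.iterate_zero_apply, step₁, step₂, step₃, step₄]

theorem iterate_ajpaStep_add_four (h : IsSmallCubicRoot d α) {n : ℕ} (hn : 3 ≤ n) :
    (ajpaStep ℚ⟮α⟯)^[n + 4] ![α, α ^ 2] = (ajpaStep ℚ⟮α⟯)^[n] ![α, α ^ 2] :=
  Function.iterate_add_eq_of_isPeriodicPt (h.iterate_ajpaStep_three ▸ h.isPeriodicPt_ajpaStep) hn

end IsSmallCubicRoot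

/-- Let `a, b` be integers with `b ≤ 3a^2 - 3` and let `γ` be the real root
of `x^3 + 3ax^2 + bx + ab - 2a^3 + 1 = 0` with `-a < γ < -a + 1`; let `K = ℚ(γ) ⊆ ℝ`.
Then the orbit of the pair `(γ - ⌊γ⌋, (γ - ⌊γ⌋)^2)` under the Algebraic Jacobi-Perron
transformation `T_K` is eventually periodic with period `4`. -/
theorem stmt_11 (a b : ℤ) (hb : b ≤ 3 * a ^ 2 - 3) (γ : ℝ)
    (hroot : γ ^ 3 + 3 * (a : ℝ) * γ ^ 2 + (b : ℝ) * γ +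
      ((a : ℝ) * (b : ℝ) - 2 * (a : ℝ) ^ 3 + 1) = 0)
    (h1 : -(a : ℝ) < γ) (h2 : γ < -(a : ℝ) + 1) :
    ∃ N : ℕ, ∀ n : ℕ, N ≤ n →
      (ajpaStep (IntermediateField.adjoin ℚ {γ}))^[n + 4]
          ![γ - (⌊γ⌋ : ℝ), (γ - (⌊γ⌋ : ℝ)) ^ 2] =
      (ajpaStep (IntermediateField.adjoin ℚ {γ}))^[n]
          ![γ - (⌊γ⌋ : ℝ), (γ - (⌊γ⌋ : ℝ)) ^ 2] := by
  have hfloor : ⌊γ⌋ = -a := Int.floor_eq_iff.mpr ⟨by push_cast; linarith, by push_cast; linarith⟩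
  have hα : IsSmallCubicRoot (3 * a ^ 2 - b - 2) (γ + a) :=
    ⟨by omega, by linarith, by linarith, by push_cast; linear_combination hroot⟩
  have hK : ℚ⟮γ⟯ = ℚ⟮γ + a⟯ := (adjoin_simple_add_intCast γ a).symm
  rw [hfloor, Int.cast_neg, sub_neg_eq_add, hK]
  exact ⟨3, fun n hn => hα.iterate_ajpaStep_add_four hn⟩
end

section
/- Let k and l be integers with k ≥ l ≥ 0 and k + l ≥ 2, and let α > 1 be a real root of x^3 − kx^2 − lx − 1. Set λ = 1/α and κ = l/α + 1/α^2. Then 0 < λ < 1, 0 < κ < 1, κ/λ = l + λ, and 1/λ = k + κ. -/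
/-!
Dividing the cubic by `α ^ 2` gives `κ = l / α + 1 / α ^ 2 = α - k`, and dividing it by `α` gives
`α (α - k) = l + 1 / α`; these are the two self-similarity identities. The root lies strictly
between `k` and `k + 1`, because `α ^ 2 (α - k) = l α + 1` is positive, and would be at least
`α ^ 2 > (α - 1) α + 1 ≥ l α + 1` if `α ≥ k + 1`; hence `0 < κ < 1`.
-/

section Field

variable {K : Type*} [Field K] {k l α : K}

lemma div_add_one_div_sq_eq_sub_of_cubic_root (hα : α ≠ 0)
    (hroot : α ^ 3 - k * α ^ 2 - l * α - 1 = 0) : l / α + 1 / α ^ 2 = α - k := by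
  field_simp
  linear_combination -hroot

lemma sub_mul_eq_add_one_div_of_cubic_root (hα : α ≠ 0)
    (hroot : α ^ 3 - k * α ^ 2 - l * α - 1 = 0) : (α - k) * α = l + 1 / α := by
  field_simp
  linear_combination hroot

end Field

section Ordered

variable {K : Type*} [Field K] [LinearOrder K] [IsStrictOrderedRing K] {k l α : K}

lemma lt_of_cubic_root (hl : 0 ≤ l) (hα : 0 < α)
    (hroot : α ^ 3 - k * α ^ 2 - l * α - 1 = 0) : k < α := by
  have hfactor : α ^ 2 * (α - k) = l * α + 1 := by linear_combination hroot
  have hpos : 0 < α ^ 2 * (α - k) := by rw [hfactor]; positivity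
  exact sub_pos.mp (pos_of_mul_pos_right hpos (by positivity))

lemma lt_add_one_of_cubic_root (hlk : l ≤ k) (hα : 1 < α)
    (hroot : α ^ 3 - k * α ^ 2 - l * α - 1 = 0) : α < k + 1 := by
  by_contra! hge
  have hfactor : α ^ 2 * (α - k) = l * α + 1 := by linear_combination hroot
  have hsq : α ^ 2 ≤ α ^ 2 * (α - k) := le_mul_of_one_le_right (by positivity) (by linarith)
  have hlin : l * α ≤ (α - 1) * α := mul_le_mul_of_nonneg_right (by linarith) (by linarith)
  nlinarith

end Ordered

theorem stmt_13_general (k l : ℤ) (hkl : l ≤ k) (hl : 0 ≤ l)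
    (α : ℝ) (hα : 1 < α)
    (hroot : α ^ 3 - (k : ℝ) * α ^ 2 - (l : ℝ) * α - 1 = 0) :
    0 < 1 / α ∧ 1 / α < 1 ∧
    0 < (l : ℝ) / α + 1 / α ^ 2 ∧ (l : ℝ) / α + 1 / α ^ 2 < 1 ∧
    ((l : ℝ) / α + 1 / α ^ 2) / (1 / α) = (l : ℝ) + 1 / α ∧
    1 / (1 / α) = (k : ℝ) + ((l : ℝ) / α + 1 / α ^ 2) := by
  have hα0 : 0 < α := one_pos.trans hα
  have hκ := div_add_one_div_sq_eq_sub_of_cubic_root hα0.ne' hroot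
  have hk_lt := lt_of_cubic_root (by exact_mod_cast hl) hα0 hroot
  have hlt_k := lt_add_one_of_cubic_root (by exact_mod_cast hkl) hα hroot
  rw [hκ, div_div_eq_mul_div, div_one, one_div_one_div]
  refine ⟨by positivity, (div_lt_one hα0).mpr hα, by linarith, by linarith,
    sub_mul_eq_add_one_div_of_cubic_root hα0.ne' hroot, by ring⟩

/-- For integers `k ≥ l ≥ 0` with `k + l ≥ 2` and `α > 1` a real root of
`x^3 - kx^2 - lx - 1`, setting `λ = 1/α` and `κ = l/α + 1/α^2`, one has `0 < λ < 1`,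
`0 < κ < 1`, `κ/λ = l + λ`, and `1/λ = k + κ`. -/
theorem stmt_13 (k l : ℤ) (hkl : l ≤ k) (hl : 0 ≤ l) (h2 : 2 ≤ k + l)
    (α : ℝ) (hα : 1 < α)
    (hroot : α ^ 3 - (k : ℝ) * α ^ 2 - (l : ℝ) * α - 1 = 0) :
    0 < 1 / α ∧ 1 / α < 1 ∧
    0 < (l : ℝ) / α + 1 / α ^ 2 ∧ (l : ℝ) / α + 1 / α ^ 2 < 1 ∧
    ((l : ℝ) / α + 1 / α ^ 2) / (1 / α) = (l : ℝ) + 1 / α ∧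
    1 / (1 / α) = (k : ℝ) + ((l : ℝ) / α + 1 / α ^ 2) :=
  stmt_13_general k l hkl hl α hα hroot
end
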